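/- If x* ∈ D is a Nash equilibrium of the client game (i.e., for every player i and every unilateral deviation t ≥ 0 with t + ∑_{j ≠ i} x* j < μ, one has u i (Function.update x* i t) ≤ u i (x*)), then x* maximizes H over D; combined with strict concavity, the Nash equilibrium of the client game is unique. -/

import Mathlib

open Filter Set Topology

/-!
`H` is an exact potential of the game: `H x = ∑ i, g i (x i) - φ x̄` with the concave
`g i t = w i * log (1 + t) - r * t` and the convex `φ s = 1 / (μ - s)`. At a Nash equilibrium `z`,
moving player `i` a fraction `s` of the way towards `x i` does not pay, so by concavity of `g i`,
`s * (g i (x i) - g i (z i)) ≤ φ (z̄ + s * (x i - z i)) - φ z̄`; dividing by `s` and letting `s → 0⁺`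
gives `g i (x i) - g i (z i) ≤ φ' z̄ * (x i - z i)`. Summing over `i` and using the tangent line
inequality of `φ` yields `H x ≤ H z`. As `H` is strictly concave on `D`, it has at most one maximizer.
-/

theorem HasDerivAt.le_of_eventually_mul_le_sub {ψ : ℝ → ℝ} {a L : ℝ} (hψ : HasDerivAt ψ L 0)
    (h : ∀ᶠ t in 𝓝[>] 0, t * a ≤ ψ t - ψ 0) : a ≤ L := by
  refine ge_of_tendsto ((hasDerivAt_iff_tendsto_slope.mp hψ).mono_left
    (nhdsWithin_mono _ (show Ioi (0 : ℝ) ⊆ {0}ᶜ from fun _ ht => ne_of_gt ht))) ?_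
  filter_upwards [h, self_mem_nhdsWithin] with t ht (htpos : 0 < t)
  rwa [slope_def_field, sub_zero, le_div_iff₀ htpos, mul_comm]

theorem ConcaveOn.sub_le_mul_sub_of_isLocalMaxOn {s : Set ℝ} {g ψ : ℝ → ℝ} {a b L : ℝ}
    (hg : ConcaveOn ℝ s g) (ha : a ∈ s) (hb : b ∈ s) (hψ : HasDerivAt ψ L a)
    (hmax : IsLocalMaxOn (fun t => g t - ψ t) s a) : g b - g a ≤ L * (b - a) := by
  set p : ℝ → ℝ := fun t => a + t * (b - a)
  have hcombo (t : ℝ) : (1 - t) • a + t • b = p t := by simp only [p, smul_eq_mul]; ring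
  have hp0 : p 0 = a := by simp [p]
  have hp : HasDerivAt p (b - a) 0 := by
    simpa only [one_mul] using ((hasDerivAt_id' (0 : ℝ)).mul_const (b - a)).const_add a
  have hψp : HasDerivAt (ψ ∘ p) (L * (b - a)) 0 := (hp0 ▸ hψ).comp 0 hp
  have hps : ∀ᶠ t in 𝓝[>] 0, p t ∈ s := by
    filter_upwards [Ioo_mem_nhdsGT one_pos] with t ht
    exact hcombo t ▸ hg.1 ha hb (show 0 ≤ 1 - t by linarith [ht.2]) ht.1.le (by ring)
  have hpa : Tendsto p (𝓝[>] 0) (𝓝[s] a) :=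
    tendsto_nhdsWithin_iff.2 ⟨hp0 ▸ hp.continuousAt.tendsto.mono_left nhdsWithin_le_nhds, hps⟩
  refine hψp.le_of_eventually_mul_le_sub ?_
  filter_upwards [hpa.eventually hmax, Ioo_mem_nhdsGT one_pos] with t hmax_t ht
  have hconc := hg.2 ha hb (show 0 ≤ 1 - t by linarith [ht.2]) ht.1.le (by ring)
  rw [hcombo, smul_eq_mul, smul_eq_mul] at hconc
  simp only [Function.comp_apply, hp0] at hmax_t ⊢
  linarith

theorem ConvexOn.mul_sub_le_sub_of_hasDerivAt {S : Set ℝ} {f : ℝ → ℝ} {x y f' : ℝ}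
    (hf : ConvexOn ℝ S f) (hx : x ∈ S) (hy : y ∈ S) (hfx : HasDerivAt f f' x) :
    f' * (y - x) ≤ f y - f x := by
  rcases lt_trichotomy x y with hxy | rfl | hxy
  · have := hf.le_slope_of_hasDerivAt hx hy hxy hfx
    rwa [slope_def_field, le_div_iff₀ (sub_pos.2 hxy)] at this
  · simp
  · have := hf.slope_le_of_hasDerivAt hy hx hxy hfx
    rw [slope_def_field, div_le_iff₀ (sub_pos.2 hxy)] at this
    linarith

theorem strictConcaveOn_mul_log_one_add_sub_mul {w : ℝ} (hw : 0 < w) (r : ℝ) :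
    StrictConcaveOn ℝ (Ici 0) fun t => w * Real.log (1 + t) - r * t := by
  refine ⟨convex_Ici 0, fun x (hx : 0 ≤ x) y (hy : 0 ≤ y) hxy a b ha hb hab => ?_⟩
  have hlog := strictConcaveOn_log_Ioi.2 (x := 1 + x) (y := 1 + y)
    (show 0 < 1 + x by linarith) (show 0 < 1 + y by linarith) (by simpa using hxy) ha hb hab
  have hcombo : a • (1 + x) + b • (1 + y) = 1 + (a * x + b * y) := by
    simp only [smul_eq_mul]; linear_combination hab
  rw [hcombo] at hlog
  simp only [smul_eq_mul] at hlog ⊢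
  nlinarith [mul_lt_mul_of_pos_left hlog hw]

theorem convexOn_one_div_sub (μ : ℝ) : ConvexOn ℝ (Iio μ) fun s => 1 / (μ - s) := by
  refine ⟨convex_Iio μ, fun x (hx : x < μ) y (hy : y < μ) a b ha hb hab => ?_⟩
  have hinv := (convexOn_zpow (𝕜 := ℝ) (-1)).2 (sub_pos.2 hx) (sub_pos.2 hy) ha hb hab
  have hxy : a • (μ - x) + b • (μ - y) = μ - (a • x + b • y) := by
    simp only [smul_eq_mul]; linear_combination μ * hab
  simpa only [hxy, zpow_neg_one, one_div] using hinv

theorem hasDerivAt_one_div_sub {μ s : ℝ} (hs : s ≠ μ) :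
    HasDerivAt (fun s => 1 / (μ - s)) (1 / (μ - s) ^ 2) s := by
  have := ((hasDerivAt_id' s).const_sub μ).inv (sub_ne_zero.2 hs.symm)
  simpa [one_div, Pi.inv_def] using this

namespace ClientGame

variable {ι : Type*} [Fintype ι]

def potential (g : ι → ℝ → ℝ) (φ : ℝ → ℝ) (x : ι → ℝ) : ℝ :=
  ∑ i, g i (x i) - φ (∑ i, x i)

theorem strictConcaveOn_potential {g : ι → ℝ → ℝ} {φ : ℝ → ℝ} {s T : Set ℝ}
    (hg : ∀ i, StrictConcaveOn ℝ s (g i)) (hφ : ConvexOn ℝ T φ) :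
    StrictConcaveOn ℝ {x | (∀ i, x i ∈ s) ∧ ∑ i, x i ∈ T} (potential g φ) := by
  refine ⟨?_, ?_⟩
  · rintro x ⟨hxs, hxT⟩ y ⟨hys, hyT⟩ a b ha hb hab
    refine ⟨fun i => (hg i).1 (hxs i) (hys i) ha hb hab, ?_⟩
    simpa [Finset.sum_add_distrib, ← Finset.mul_sum] using hφ.1 hxT hyT ha hb hab
  · rintro x ⟨hxs, hxT⟩ y ⟨hys, hyT⟩ hxy a b ha hb hab
    obtain ⟨j, hj⟩ := Function.ne_iff.mp hxy
    have hsum : ∑ i, (a * g i (x i) + b * g i (y i)) < ∑ i, g i (a * x i + b * y i) :=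
      Finset.sum_lt_sum (fun i _ => (hg i).concaveOn.2 (hxs i) (hys i) ha.le hb.le hab)
        ⟨j, Finset.mem_univ j, (hg j).2 (hxs j) (hys j) hj ha hb hab⟩
    have hφab : φ (a * ∑ i, x i + b * ∑ i, y i) ≤ a * φ (∑ i, x i) + b * φ (∑ i, y i) :=
      hφ.2 hxT hyT ha.le hb.le hab
    simp only [potential, Pi.add_apply, Pi.smul_apply, smul_eq_mul, Finset.sum_add_distrib,
      ← Finset.mul_sum] at hsum hφab ⊢
    linarith

theorem potential_le_of_forall_isLocalMaxOn [DecidableEq ι] {g : ι → ℝ → ℝ} {φ : ℝ → ℝ}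
    {s T : Set ℝ} {L : ℝ} {x z : ι → ℝ} (hg : ∀ i, ConcaveOn ℝ s (g i)) (hφ : ConvexOn ℝ T φ)
    (hφz : HasDerivAt φ L (∑ i, z i)) (hxs : ∀ i, x i ∈ s) (hzs : ∀ i, z i ∈ s)
    (hxT : ∑ i, x i ∈ T) (hzT : ∑ i, z i ∈ T)
    (hz : ∀ i, IsLocalMaxOn (fun t => g i t - φ (t + ∑ j ∈ Finset.univ.erase i, z j)) s (z i)) :
    potential g φ x ≤ potential g φ z := by
  have hcoord (i : ι) : g i (x i) - g i (z i) ≤ L * (x i - z i) := by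
    have hφi : HasDerivAt (fun t => φ (t + ∑ j ∈ Finset.univ.erase i, z j)) L (z i) := by
      refine HasDerivAt.comp_add_const (f := φ) _ _ ?_
      rwa [Finset.add_sum_erase _ _ (Finset.mem_univ i)]
    exact (hg i).sub_le_mul_sub_of_isLocalMaxOn (hzs i) (hxs i) hφi (hz i)
  have htangent := hφ.mul_sub_le_sub_of_hasDerivAt hzT hxT hφz
  have hsum := Finset.sum_le_sum fun i (_ : i ∈ Finset.univ) => hcoord i
  simp only [Finset.sum_sub_distrib, ← Finset.mul_sum] at hsum
  simp only [potential]
  linarith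

end ClientGame

open ClientGame

theorem nashEquilibrium_maximizes_and_unique_general
    (N : ℕ) (μ r : ℝ)
    (w : Fin N → ℝ) (hw : ∀ i, 0 < w i)
    (D : Set (Fin N → ℝ)) (hD : D = {x | (∀ i, x i ≥ 0) ∧ (∑ i, x i) < μ})
    (H : (Fin N → ℝ) → ℝ)
    (hH : ∀ x, H x = (∑ i, w i * Real.log (1 + x i)) - r * (∑ i, x i)
        - 1 / (μ - ∑ i, x i))
    (u : Fin N → (Fin N → ℝ) → ℝ)
    (hu : ∀ i x, u i x = w i * Real.log (1 + x i) - r * x i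
        - 1 / (μ - ∑ j, x j))
    (xstar : Fin N → ℝ) (hxD : xstar ∈ D)
    (hnash : ∀ i : Fin N, ∀ t : ℝ, 0 ≤ t →
      t + ∑ j ∈ Finset.univ.erase i, xstar j < μ →
      u i (Function.update xstar i t) ≤ u i xstar) :
    (∀ x ∈ D, H x ≤ H xstar) ∧
    (∀ y ∈ D, (∀ i : Fin N, ∀ t : ℝ, 0 ≤ t →
        t + ∑ j ∈ Finset.univ.erase i, y j < μ →
        u i (Function.update y i t) ≤ u i y) → y = xstar) := by
  set g : Fin N → ℝ → ℝ := fun i t => w i * Real.log (1 + t) - r * t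
  set φ : ℝ → ℝ := fun s => 1 / (μ - s)
  have hg (i : Fin N) : StrictConcaveOn ℝ (Ici 0) (g i) :=
    strictConcaveOn_mul_log_one_add_sub_mul (hw i) r
  have hHg : H = potential g φ := funext fun x => by
    simp only [hH, potential, g, φ, Finset.sum_sub_distrib, Finset.mul_sum]
  have hug (i : Fin N) (y : Fin N → ℝ) (t : ℝ) :
      u i (Function.update y i t) = g i t - φ (t + ∑ j ∈ Finset.univ.erase i, y j) := by
    rw [hu, Function.update_self, Finset.sum_update_of_mem (Finset.mem_univ i),
      Finset.sdiff_singleton_eq_erase]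
  have hmax : ∀ y ∈ D, (∀ i : Fin N, ∀ t : ℝ, 0 ≤ t →
      t + ∑ j ∈ Finset.univ.erase i, y j < μ → u i (Function.update y i t) ≤ u i y) →
      IsMaxOn H D y := by
    rw [hD, hHg]
    rintro y ⟨hy0, hyμ⟩ hy x ⟨hx0, hxμ⟩
    refine potential_le_of_forall_isLocalMaxOn (fun i => (hg i).concaveOn)
      (convexOn_one_div_sub μ) (hasDerivAt_one_div_sub hyμ.ne) hx0 hy0 hxμ hyμ fun i => ?_
    have hyi : y i < μ - ∑ j ∈ Finset.univ.erase i, y j := by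
      rwa [lt_sub_iff_add_lt, Finset.add_sum_erase _ _ (Finset.mem_univ i)]
    have hyy := hug i y (y i)
    rw [Function.update_eq_self] at hyy
    filter_upwards [inter_mem_nhdsWithin (Ici 0) (Iio_mem_nhds hyi)] with t ⟨ht0, htμ⟩
    simpa only [hug, hyy] using hy i t ht0 (lt_sub_iff_add_lt.1 htμ)
  have hconc : StrictConcaveOn ℝ D H := by
    rw [hD, hHg]
    exact strictConcaveOn_potential hg (convexOn_one_div_sub μ)
  exact ⟨fun x hx => hmax xstar hxD hnash hx, fun y hy hyn =>
    hconc.eq_of_isMaxOn (hmax y hy hyn) (hmax xstar hxD hnash) hy hxD⟩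

/-- A Nash equilibrium of the client game maximizes the potential `H` over `D`;
combined with strict concavity of `H`, the Nash equilibrium is unique. -/
theorem nashEquilibrium_maximizes_and_unique
    (N : ℕ) (hN : 0 < N) (μ r : ℝ) (hμ : 0 < μ) (hr : 0 < r)
    (w : Fin N → ℝ) (hw : ∀ i, 0 < w i)
    (D : Set (Fin N → ℝ)) (hD : D = {x | (∀ i, x i ≥ 0) ∧ (∑ i, x i) < μ})
    (H : (Fin N → ℝ) → ℝ)
    (hH : ∀ x, H x = (∑ i, w i * Real.log (1 + x i)) - r * (∑ i, x i)
        - 1 / (μ - ∑ i, x i))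
    (u : Fin N → (Fin N → ℝ) → ℝ)
    (hu : ∀ i x, u i x = w i * Real.log (1 + x i) - r * x i
        - 1 / (μ - ∑ j, x j))
    (xstar : Fin N → ℝ) (hxD : xstar ∈ D)
    (hnash : ∀ i : Fin N, ∀ t : ℝ, 0 ≤ t →
      t + ∑ j ∈ Finset.univ.erase i, xstar j < μ →
      u i (Function.update xstar i t) ≤ u i xstar) :
    (∀ x ∈ D, H x ≤ H xstar) ∧
    (∀ y ∈ D, (∀ i : Fin N, ∀ t : ℝ, 0 ≤ t →
        t + ∑ j ∈ Finset.univ.erase i, y j < μ →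
        u i (Function.update y i t) ≤ u i y) → y = xstar) :=
  nashEquilibrium_maximizes_and_unique_general N μ r w hw D hD H hH u hu xstar hxD hnash
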